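/- arXiv:1306.4395 — 6 statements merged into one kernel-verified Lean document; each statement's English description precedes it below -/
import Mathlib

section
/- Let W : Λ → ℝ be a real sequence on a finite set Λ, 0 ∈ Λ, E = W(0), and suppose |W(n) − E| ≥ κ for all n ∈ Λ \ {0}. Let T be a self-adjoint operator on ℓ²(Λ) with operator norm ‖T‖, let λ ∈ (0, κ/(2‖T‖)), and H = λT + W (W acting by multiplication). Then the spectral projection of H onto [E − κ/2, E + κ/2] has trace exactly 1; i.e., H has exactly one eigenvalue E₁ in [E − κ/2, E + κ/2], and |E₁ − E| ≤ λ‖T‖. -/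
/-!
The unperturbed operator `W` has `δ₀` as an eigenvector with eigenvalue `E`, so
`‖(H - E) δ₀‖ = λ ‖T δ₀‖ ≤ λ‖T‖ < κ/2`; expanding `δ₀` along the orthogonal eigenspaces of
the self-adjoint `H` then produces an eigenvalue `E₁` with `|E₁ - E| ≤ λ‖T‖`.
Conversely, every `ψ` in the spectral subspace of `[E - κ/2, E + κ/2]` satisfies
`‖(H - E) ψ‖ ≤ κ/2 ‖ψ‖`, whereas if `ψ` vanishes at `0` the separation of the diagonal gives
`‖(H - E) ψ‖ ≥ (κ - λ‖T‖) ‖ψ‖ > κ/2 ‖ψ‖`. Hence evaluation at `0` is injective on that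
subspace, which therefore has dimension at most one.
-/

open Module Module.End

namespace LinearMap.IsSymmetric

variable {𝕜 E : Type*} [RCLike 𝕜] [NormedAddCommGroup E] [InnerProductSpace 𝕜 E]
  {A : E →ₗ[𝕜] E}

theorem norm_sq_sum_eigenspace (hA : A.IsSymmetric) {ι : Type*} {e : ι → 𝕜}
    (he : Function.Injective e) (s : Finset ι) (l : ∀ i, eigenspace A (e i)) :
    ‖∑ i ∈ s, (l i : E)‖ ^ 2 = ∑ i ∈ s, ‖l i‖ ^ 2 :=
  (hA.orthogonalFamily_eigenspaces.comp he).norm_sum l s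

theorem norm_sq_apply_sub_smul_sum_eigenspace (hA : A.IsSymmetric) {ι : Type*} {e : ι → 𝕜}
    (he : Function.Injective e) (c : 𝕜) (s : Finset ι) (l : ∀ i, eigenspace A (e i)) :
    ‖A (∑ i ∈ s, (l i : E)) - c • ∑ i ∈ s, (l i : E)‖ ^ 2
      = ∑ i ∈ s, ‖e i - c‖ ^ 2 * ‖l i‖ ^ 2 := by
  have hsum : A (∑ i ∈ s, (l i : E)) - c • ∑ i ∈ s, (l i : E)
      = ∑ i ∈ s, (((e i - c) • l i : eigenspace A (e i)) : E) := by
    simp only [map_sum, Finset.smul_sum, ← Finset.sum_sub_distrib, sub_smul, Submodule.coe_sub,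
      Submodule.coe_smul, mem_eigenspace_iff.mp (l _).2]
  rw [hsum, hA.norm_sq_sum_eigenspace he]
  simp only [norm_smul, mul_pow]

theorem exists_hasEigenvalue_abs_sub_mul_le [FiniteDimensional 𝕜 E] (hA : A.IsSymmetric)
    (c : ℝ) {v : E} (hv : v ≠ 0) :
    ∃ μ : ℝ, HasEigenvalue A μ ∧ |μ - c| * ‖v‖ ≤ ‖A v - (c : 𝕜) • v‖ := by
  classical
  have hv_mem : v ∈ ⨆ μ, eigenspace A μ := by
    rw [Submodule.orthogonal_eq_bot_iff.mp hA.orthogonalComplement_iSup_eigenspaces_eq_bot]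
    exact Submodule.mem_top
  obtain ⟨f, rfl⟩ := (Submodule.mem_iSup_iff_exists_dfinsupp' _ v).mp hv_mem
  have hsupp : f.support.Nonempty := by
    rw [Finset.nonempty_iff_ne_empty]
    rintro h
    exact hv (by simp [DFinsupp.sum, h])
  obtain ⟨μ₀, hμ₀, hmin⟩ := f.support.exists_min_image (fun μ => ‖μ - c‖) hsupp
  have hμ₀_eig : HasEigenvalue A μ₀ :=
    hasEigenvalue_of_hasEigenvector ⟨(f μ₀).2, by simpa using DFinsupp.mem_support_iff.mp hμ₀⟩
  have hμ₀_real : ((RCLike.re μ₀ : ℝ) : 𝕜) = μ₀ :=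
    RCLike.conj_eq_iff_re.mp (hA.conj_eigenvalue_eq_self hμ₀_eig)
  refine ⟨RCLike.re μ₀, by rwa [hμ₀_real], ?_⟩
  have hdist : |RCLike.re μ₀ - c| = ‖μ₀ - c‖ := by
    rw [← hμ₀_real, ← RCLike.ofReal_sub, RCLike.norm_ofReal, hμ₀_real]
  rw [hdist, ← sq_le_sq₀ (by positivity) (norm_nonneg _)]
  calc (‖μ₀ - c‖ * ‖f.sum fun _ x => (x : E)‖) ^ 2
      = ∑ μ ∈ f.support, ‖μ₀ - c‖ ^ 2 * ‖f μ‖ ^ 2 := by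
        rw [mul_pow, DFinsupp.sum, hA.norm_sq_sum_eigenspace Function.injective_id,
          Finset.mul_sum]
    _ ≤ ∑ μ ∈ f.support, ‖μ - c‖ ^ 2 * ‖f μ‖ ^ 2 := by
        gcongr with μ hμ
        exact hmin μ hμ
    _ = ‖A (f.sum fun _ x => (x : E)) - (c : 𝕜) • f.sum fun _ x => (x : E)‖ ^ 2 :=
        (hA.norm_sq_apply_sub_smul_sum_eigenspace Function.injective_id _ _ _).symm

theorem norm_apply_sub_smul_le_of_mem_iSup_eigenspace (hA : A.IsSymmetric) {S : Set ℝ}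
    {c r : ℝ} (hr : 0 ≤ r) (hS : ∀ μ ∈ S, |μ - c| ≤ r) {v : E}
    (hv : v ∈ ⨆ μ ∈ S, eigenspace A (μ : 𝕜)) :
    ‖A v - (c : 𝕜) • v‖ ≤ r * ‖v‖ := by
  classical
  obtain ⟨f, rfl⟩ := (Submodule.mem_biSup_iff_exists_dfinsupp (· ∈ S) _ v).mp hv
  set g := f.filter (· ∈ S)
  have hg : ∀ μ ∈ g.support, |μ - c| ≤ r := fun μ hμ => hS μ <| by
    by_contra hμS
    exact DFinsupp.mem_support_iff.mp hμ (DFinsupp.filter_apply_neg _ hμS)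
  have hsum : DFinsupp.lsum ℕ (fun μ : ℝ => (eigenspace A (μ : 𝕜)).subtype) g
      = ∑ μ ∈ g.support, (g μ : E) := by
    simp [DFinsupp.sumAddHom_apply, DFinsupp.sum]
  rw [hsum, ← sq_le_sq₀ (norm_nonneg _) (by positivity),
    hA.norm_sq_apply_sub_smul_sum_eigenspace RCLike.ofReal_injective, mul_pow,
    hA.norm_sq_sum_eigenspace RCLike.ofReal_injective, Finset.mul_sum]
  gcongr with μ hμ
  rw [← RCLike.ofReal_sub, RCLike.norm_ofReal]
  exact hg μ hμ

end LinearMap.IsSymmetric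

theorem PiLp.norm_le_norm_of_forall_norm_apply_le {ι : Type*} [Fintype ι] {β : ι → Type*}
    [∀ i, SeminormedAddCommGroup (β i)] {x y : PiLp 2 β} (h : ∀ i, ‖x i‖ ≤ ‖y i‖) :
    ‖x‖ ≤ ‖y‖ := by
  rw [← sq_le_sq₀ (norm_nonneg _) (norm_nonneg _), PiLp.norm_sq_eq_of_L2, PiLp.norm_sq_eq_of_L2]
  gcongr with i
  exact h i

theorem Submodule.finrank_le_one_of_forall_apply_eq_zero {K V : Type*} [Field K]
    [AddCommGroup V] [Module K V] (φ : V →ₗ[K] K) {S : Submodule K V}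
    (h : ∀ x ∈ S, φ x = 0 → x = 0) : finrank K S ≤ 1 := by
  have hinj : Function.Injective (φ ∘ₗ S.subtype) := by
    rw [← LinearMap.ker_eq_bot, Submodule.eq_bot_iff]
    rintro ⟨x, hx⟩ hφx
    exact Subtype.ext (h x hx hφx)
  simpa using LinearMap.finrank_le_finrank_of_injective hinj

section DiagonalPlusPerturbation

variable {𝕜 ι : Type*} [RCLike 𝕜] [Fintype ι]
  {T : EuclideanSpace 𝕜 ι →L[𝕜] EuclideanSpace 𝕜 ι} {lam : ℝ} {w : ι → ℝ}
  {H : EuclideanSpace 𝕜 ι →ₗ[𝕜] EuclideanSpace 𝕜 ι}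

theorem isSymmetric_of_apply_eq_smul_add_mul (hT : IsSelfAdjoint T)
    (hH : ∀ ψ n, H ψ n = lam * T ψ n + w n * ψ n) : H.IsSymmetric := by
  classical
  have hdecomp : H = (lam : 𝕜) • (T : EuclideanSpace 𝕜 ι →ₗ[𝕜] EuclideanSpace 𝕜 ι)
      + (Matrix.diagonal fun n => (w n : 𝕜)).toEuclideanLin := by
    ext ψ n
    simp [hH, Matrix.mulVec_diagonal, RCLike.real_smul_eq_coe_mul]
  rw [hdecomp]
  refine (hT.isSymmetric.smul (RCLike.conj_ofReal lam)).add ?_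
  exact Matrix.isSymmetric_toEuclideanLin_iff.mpr (Matrix.isHermitian_diagonal_of_self_adjoint _
    (by ext n; simp [RCLike.conj_ofReal]))

theorem norm_apply_single_sub_smul_le [DecidableEq ι]
    (hH : ∀ ψ n, H ψ n = lam * T ψ n + w n * ψ n) (i : ι) :
    ‖H (EuclideanSpace.single i 1) - (w i : 𝕜) • EuclideanSpace.single i 1‖ ≤ |lam| * ‖T‖ := by
  have hδ : H (EuclideanSpace.single i 1) - (w i : 𝕜) • EuclideanSpace.single i 1
      = (lam : 𝕜) • T (EuclideanSpace.single i 1) := by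
    ext n
    by_cases hn : n = i
    · subst hn; simp [hH, RCLike.real_smul_eq_coe_mul]
    · simp [hH, hn, RCLike.real_smul_eq_coe_mul]
  calc _ = |lam| * ‖T (EuclideanSpace.single i (1 : 𝕜))‖ := by
        rw [hδ, norm_smul, RCLike.norm_ofReal]
    _ ≤ |lam| * ‖T‖ := by
        gcongr
        simpa using T.le_opNorm (EuclideanSpace.single i (1 : 𝕜))

theorem sub_mul_norm_le_norm_apply_sub_smul (hH : ∀ ψ n, H ψ n = lam * T ψ n + w n * ψ n)
    {κ : ℝ} (hκ : 0 ≤ κ) {i : ι} (hsep : ∀ n ≠ i, κ ≤ |w n - w i|)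
    {ψ : EuclideanSpace 𝕜 ι} (hψ : ψ i = 0) :
    (κ - |lam| * ‖T‖) * ‖ψ‖ ≤ ‖H ψ - (w i : 𝕜) • ψ‖ := by
  set χ := H ψ - (w i : 𝕜) • ψ - (lam : 𝕜) • T ψ
  have hχ : κ * ‖ψ‖ ≤ ‖χ‖ := by
    rw [← abs_of_nonneg hκ, ← RCLike.norm_ofReal (K := 𝕜), ← norm_smul]
    refine PiLp.norm_le_norm_of_forall_norm_apply_le fun n => ?_
    by_cases hn : n = i
    · subst hn; simp [hψ]
    · have hχn : χ n = ((w n - w i : ℝ) : 𝕜) * ψ n := by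
        simp only [χ, PiLp.sub_apply, PiLp.smul_apply, smul_eq_mul, hH, RCLike.ofReal_sub]
        ring
      rw [hχn, PiLp.smul_apply, norm_smul, norm_mul, RCLike.norm_ofReal, RCLike.norm_ofReal,
        abs_of_nonneg hκ]
      gcongr
      exact hsep n hn
  have hTψ : ‖(lam : 𝕜) • T ψ‖ ≤ |lam| * ‖T‖ * ‖ψ‖ := by
    rw [norm_smul, RCLike.norm_ofReal, mul_assoc]
    gcongr
    exact T.le_opNorm ψ
  have := norm_sub_le (H ψ - (w i : 𝕜) • ψ) ((lam : 𝕜) • T ψ)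
  nlinarith

end DiagonalPlusPerturbation

/-- Initial condition: if `E = W 0` is `κ`-separated from the other diagonal values `W n`,
`n ∈ Λ \ {0}`, and `0 < λ < κ/(2‖T‖)`, then `H = λT + W` has exactly one eigenvalue `E₁`
(counted with multiplicity) in `[E − κ/2, E + κ/2]`, and `|E₁ − E| ≤ λ‖T‖`. -/
theorem initial_simple_eigenvalue
    {d : ℕ} (Λ : Finset (Fin d → ℤ)) (h0 : (0 : Fin d → ℤ) ∈ Λ)
    (W : (Fin d → ℤ) → ℝ) (κ lam : ℝ) (hκ : 0 < κ)
    (T : EuclideanSpace ℂ Λ →L[ℂ] EuclideanSpace ℂ Λ) (hT : IsSelfAdjoint T)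
    (hsep : ∀ n : Λ, (n : Fin d → ℤ) ≠ 0 → κ ≤ |W n - W 0|)
    (hlam : 0 < lam) (hlam' : lam < κ / (2 * ‖T‖))
    (H : EuclideanSpace ℂ Λ →ₗ[ℂ] EuclideanSpace ℂ Λ)
    (hHdef : ∀ (ψ : EuclideanSpace ℂ Λ) (n : Λ),
      H ψ n = (lam : ℂ) * T ψ n + (W n : ℂ) * ψ n) :
    (finrank ℂ
      (⨆ μ ∈ Set.Icc (W 0 - κ / 2) (W 0 + κ / 2),
        Module.End.eigenspace H (μ : ℂ) : Submodule ℂ (EuclideanSpace ℂ Λ)) = 1) ∧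
    ∃ E₁ ∈ Set.Icc (W 0 - κ / 2) (W 0 + κ / 2),
      (Module.End.eigenspace H (E₁ : ℂ) ≠ ⊥) ∧ |E₁ - W 0| ≤ lam * ‖T‖ := by
  classical
  set i₀ : Λ := ⟨0, h0⟩
  have hTpos : 0 < ‖T‖ := (norm_nonneg T).lt_of_ne fun h => by
    rw [← h, mul_zero, div_zero] at hlam'
    linarith
  have hlamT : lam * ‖T‖ < κ / 2 := by
    rw [lt_div_iff₀ (by positivity)] at hlam'
    linarith
  have hHsym : H.IsSymmetric := isSymmetric_of_apply_eq_smul_add_mul hT hHdef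
  obtain ⟨E₁, hE₁, hE₁_dist⟩ := hHsym.exists_hasEigenvalue_abs_sub_mul_le (W 0)
    (v := EuclideanSpace.single i₀ 1) (by simp)
  have hE₁_le : |E₁ - W 0| ≤ lam * ‖T‖ := by
    simpa [abs_of_pos hlam] using hE₁_dist.trans (norm_apply_single_sub_smul_le hHdef i₀)
  have hE₁_mem : E₁ ∈ Set.Icc (W 0 - κ / 2) (W 0 + κ / 2) :=
    Set.mem_Icc_iff_abs_le.mp (by rw [abs_sub_comm]; linarith)
  refine ⟨le_antisymm ?_ ?_, E₁, hE₁_mem, hasEigenvalue_iff.mp hE₁, hE₁_le⟩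
  · refine Submodule.finrank_le_one_of_forall_apply_eq_zero
      (EuclideanSpace.proj (𝕜 := ℂ) i₀).toLinearMap fun ψ hψ hψ₀ => norm_le_zero_iff.mp ?_
    have hupper := hHsym.norm_apply_sub_smul_le_of_mem_iSup_eigenspace (half_pos hκ).le
      (fun μ hμ => by rw [abs_sub_comm]; exact Set.mem_Icc_iff_abs_le.mpr hμ) hψ
    have hlower := sub_mul_norm_le_norm_apply_sub_smul hHdef hκ.le (i := i₀)
      (fun n hn => hsep n fun h => hn (Subtype.ext h)) hψ₀
    rw [abs_of_pos hlam] at hlower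
    nlinarith [norm_nonneg ψ]
  · exact Submodule.one_le_finrank_iff.mpr
      (ne_bot_of_le_ne_bot (hasEigenvalue_iff.mp hE₁) (le_iSup₂_of_le E₁ hE₁_mem le_rfl))
end

section
/- With the hypotheses of the previous statement (|W(n) − W(0)| ≥ κ for n ≠ 0, H = λT + W, λ < κ/(2‖T‖)), let ψ be a normalized eigenvector of H with eigenvalue E₁ satisfying |E₁ − W(0)| ≤ λ‖T‖ < κ/2. Then Σ_{n ≠ 0} |ψ(n)|² ≤ λ‖T‖/κ, and consequently |ψ(0)|² ≥ 1 − λ‖T‖/κ. -/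
/-!
Off the origin the eigenvalue equation reads `(W n - E₁) ψ n = -λ (Tψ) n`, so
`∑ₙ (W n - E₁)² |ψ n|² = λ² ‖Tψ‖² ≤ (λ‖T‖)²`. With `b = |E₁ - W 0|`, the weight is `b²` at the
origin and at least `(κ - b)²` elsewhere; since `|ψ 0|² = 1 - S` for the off-origin mass `S`,
this gives `κ (κ - 2b) S + b² ≤ (λ‖T‖)²`, which forces `S ≤ λ‖T‖ / κ` as soon as `2λ‖T‖ < κ`.
-/

open Finset

lemma le_div_of_sq_mul_add_sq_mul_le {a b κ S : ℝ} (hb : 0 ≤ b) (hba : b ≤ a) (haκ : 2 * a < κ)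
    (h : (κ - b) ^ 2 * S + b ^ 2 * (1 - S) ≤ a ^ 2) : S ≤ a / κ := by
  have hκ : 0 < κ := by linarith
  rw [le_div_iff₀ hκ]
  -- the hypothesis is `κ (κ - 2b) S ≤ a² - b²`, and `a² - b² = a (κ - 2b) - (a - b)² - a (κ - 2a)`
  nlinarith [sq_nonneg (a - b), mul_nonneg (hb.trans hba) (by linarith : (0 : ℝ) ≤ κ - 2 * a)]

section

variable {𝕜 ι : Type*} [RCLike 𝕜] [Fintype ι]

lemma sum_sq_mul_norm_sq_eq_norm_sq {ψ φ : EuclideanSpace 𝕜 ι} {V : ι → ℝ}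
    (h : ∀ n, (V n : 𝕜) * ψ n = φ n) : ∑ n, V n ^ 2 * ‖ψ n‖ ^ 2 = ‖φ‖ ^ 2 := by
  rw [EuclideanSpace.norm_sq_eq]
  refine sum_congr rfl fun n _ => ?_
  rw [← h n, norm_mul, RCLike.norm_ofReal, mul_pow, sq_abs]

lemma sum_erase_norm_sq_add_norm_sq [DecidableEq ι] (ψ : EuclideanSpace 𝕜 ι) (z : ι) :
    ∑ n ∈ univ.erase z, ‖ψ n‖ ^ 2 + ‖ψ z‖ ^ 2 = ‖ψ‖ ^ 2 := by
  rw [sum_erase_add _ _ (mem_univ z), EuclideanSpace.norm_sq_eq]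

lemma sum_erase_norm_sq_le_of_separated [DecidableEq ι] {ψ : EuclideanSpace 𝕜 ι} (hψ : ‖ψ‖ = 1)
    {W : ι → ℝ} {E a κ : ℝ} {z : ι} (hsep : ∀ n ≠ z, κ ≤ |W n - W z|) (hE : |E - W z| ≤ a)
    (haκ : 2 * a < κ) (hbound : ∑ n, (W n - E) ^ 2 * ‖ψ n‖ ^ 2 ≤ a ^ 2) :
    ∑ n ∈ univ.erase z, ‖ψ n‖ ^ 2 ≤ a / κ := by
  set b := |E - W z|
  have hb : 0 ≤ b := abs_nonneg _
  have hmass := sum_erase_norm_sq_add_norm_sq ψ z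
  rw [hψ, one_pow] at hmass
  have hfar : ∀ n ∈ univ.erase z, (κ - b) ^ 2 * ‖ψ n‖ ^ 2 ≤ (W n - E) ^ 2 * ‖ψ n‖ ^ 2 := by
    intro n hn
    have htri : κ - b ≤ |W n - E| := by
      have := abs_sub_abs_le_abs_sub (W n - W z) (E - W z)
      rw [sub_sub_sub_cancel_right] at this
      linarith [hsep n (ne_of_mem_erase hn)]
    have hsq : (κ - b) ^ 2 ≤ (W n - E) ^ 2 := by
      rw [← sq_abs (W n - E)]
      exact pow_le_pow_left₀ (by linarith) htri 2
    exact mul_le_mul_of_nonneg_right hsq (by positivity)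
  have hnear : (W z - E) ^ 2 = b ^ 2 := by rw [← sq_abs, abs_sub_comm]
  refine le_div_of_sq_mul_add_sq_mul_le hb hE haκ ?_
  calc (κ - b) ^ 2 * ∑ n ∈ univ.erase z, ‖ψ n‖ ^ 2 + b ^ 2 * (1 - ∑ n ∈ univ.erase z, ‖ψ n‖ ^ 2)
      ≤ ∑ n ∈ univ.erase z, (W n - E) ^ 2 * ‖ψ n‖ ^ 2 + (W z - E) ^ 2 * ‖ψ z‖ ^ 2 := by
        rw [mul_sum, hnear, ← hmass, add_sub_cancel_left]
        exact add_le_add_left (sum_le_sum hfar) _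
    _ = ∑ n, (W n - E) ^ 2 * ‖ψ n‖ ^ 2 := sum_erase_add _ _ (mem_univ z)
    _ ≤ a ^ 2 := hbound

end

theorem initial_eigenfunction_localization_general
    {d : ℕ} (Λ : Finset (Fin d → ℤ)) (h0 : (0 : Fin d → ℤ) ∈ Λ)
    (W : (Fin d → ℤ) → ℝ) (κ lam : ℝ)
    (T : EuclideanSpace ℂ Λ →L[ℂ] EuclideanSpace ℂ Λ)
    (hsep : ∀ n : Λ, (n : Fin d → ℤ) ≠ 0 → κ ≤ |W n - W 0|)
    (H : EuclideanSpace ℂ Λ →ₗ[ℂ] EuclideanSpace ℂ Λ)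
    (hHdef : ∀ (ψ : EuclideanSpace ℂ Λ) (n : Λ),
      H ψ n = (lam : ℂ) * T ψ n + (W n : ℂ) * ψ n)
    (ψ : EuclideanSpace ℂ Λ) (hψ : ‖ψ‖ = 1)
    (E₁ : ℝ) (hev : H ψ = (E₁ : ℂ) • ψ)
    (hE₁ : |E₁ - W 0| ≤ lam * ‖T‖) (hhalf : lam * ‖T‖ < κ / 2) :
    (∑ n ∈ Finset.univ.filter (fun n : Λ => (n : Fin d → ℤ) ≠ 0), ‖ψ n‖ ^ 2)
      ≤ lam * ‖T‖ / κ ∧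
    1 - lam * ‖T‖ / κ ≤ ‖ψ ⟨0, h0⟩‖ ^ 2 := by
  set z : Λ := ⟨0, h0⟩
  have hz : ∀ n : Λ, n ≠ z ↔ (n : Fin d → ℤ) ≠ 0 := fun n => not_congr Subtype.ext_iff
  have hoff : univ.filter (fun n : Λ => (n : Fin d → ℤ) ≠ 0) = univ.erase z := by
    simp only [← filter_ne', hz]
  have hpointwise : ∀ n : Λ, ((W n - E₁ : ℝ) : ℂ) * ψ n = (-(lam • T ψ)) n := by
    intro n
    have := hHdef ψ n
    rw [hev, PiLp.smul_apply, smul_eq_mul] at this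
    simp only [PiLp.neg_apply, PiLp.smul_apply, Complex.real_smul]
    push_cast
    linear_combination -this
  have hbound : ∑ n : Λ, (W n - E₁) ^ 2 * ‖ψ n‖ ^ 2 ≤ (lam * ‖T‖) ^ 2 := by
    rw [sum_sq_mul_norm_sq_eq_norm_sq (V := fun n : Λ => W n - E₁) hpointwise, norm_neg,
      norm_smul, ← sq_abs (lam * ‖T‖), abs_mul, abs_norm, Real.norm_eq_abs]
    gcongr
    simpa [hψ] using T.le_opNorm ψ
  have hS := sum_erase_norm_sq_le_of_separated hψ (z := z) (fun n hn => hsep n ((hz n).1 hn))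
    hE₁ (by linarith) hbound
  have hmass := sum_erase_norm_sq_add_norm_sq ψ z
  rw [hψ, one_pow] at hmass
  rw [hoff]
  exact ⟨hS, by linarith⟩

/-- Eigenfunction localization at the initial scale: under the separation hypothesis,
the normalized eigenvector with eigenvalue near `W 0` is concentrated at the site `0`. -/
theorem initial_eigenfunction_localization
    {d : ℕ} (Λ : Finset (Fin d → ℤ)) (h0 : (0 : Fin d → ℤ) ∈ Λ)
    (W : (Fin d → ℤ) → ℝ) (κ lam : ℝ) (hκ : 0 < κ)
    (T : EuclideanSpace ℂ Λ →L[ℂ] EuclideanSpace ℂ Λ) (hT : IsSelfAdjoint T)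
    (hsep : ∀ n : Λ, (n : Fin d → ℤ) ≠ 0 → κ ≤ |W n - W 0|)
    (hlam : 0 < lam) (hlam' : lam < κ / (2 * ‖T‖))
    (H : EuclideanSpace ℂ Λ →ₗ[ℂ] EuclideanSpace ℂ Λ)
    (hHdef : ∀ (ψ : EuclideanSpace ℂ Λ) (n : Λ),
      H ψ n = (lam : ℂ) * T ψ n + (W n : ℂ) * ψ n)
    (ψ : EuclideanSpace ℂ Λ) (hψ : ‖ψ‖ = 1)
    (E₁ : ℝ) (hev : H ψ = (E₁ : ℂ) • ψ)
    (hE₁ : |E₁ - W 0| ≤ lam * ‖T‖) (hhalf : lam * ‖T‖ < κ / 2) :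
    (∑ n ∈ Finset.univ.filter (fun n : Λ => (n : Fin d → ℤ) ≠ 0), ‖ψ n‖ ^ 2)
      ≤ lam * ‖T‖ / κ ∧
    1 - lam * ‖T‖ / κ ≤ ‖ψ ⟨0, h0⟩‖ ^ 2 :=
  initial_eigenfunction_localization_general Λ h0 W κ lam T hsep H hHdef ψ hψ E₁ hev hE₁ hhalf
end

section
/- Let H be a self-adjoint operator on a Hilbert space, E an eigenvalue with normalized eigenvector ψ, δ > 0, and assume E is δ-simple, i.e., the spectral projection of H onto [E − δ, E + δ] has rank 1. If φ₁ is a unit vector with ‖(H − E)φ₁‖ ≤ ε and ‖φ₁‖ ≥ 1 − ε for some ε < δ/20, then writing φ₁ = ⟨ψ, φ₁⟩ψ + φ₁^⊥ with φ₁^⊥ ⊥ ψ, one has ‖(H − E)φ₁^⊥‖ ≥ δ‖φ₁^⊥‖, and hence |⟨ψ, φ₁⟩| ≥ ‖φ₁‖ − (10/δ)·ε. -/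
open Module Module.End

/-!
Expand in an orthonormal eigenbasis of `H`: the vector `φ₁⊥ = φ₁ - ⟨ψ, φ₁⟩ ψ` is orthogonal to
every eigenspace with eigenvalue in `[E - δ, E + δ]`, since by `δ`-simplicity those all lie in
`ℂ ∙ ψ`. So every coefficient of `φ₁⊥` that survives is multiplied by a factor `|μᵢ - E| > δ`
under `H - E`, giving `δ ‖φ₁⊥‖ ≤ ‖(H - E) φ₁⊥‖ = ‖(H - E) φ₁‖ ≤ ε`. The overlap bound is then the
triangle inequality `‖φ₁‖ ≤ |⟨ψ, φ₁⟩| + ‖φ₁⊥‖`.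
-/

namespace LinearMap.IsSymmetric

variable {𝕜 F : Type*} [RCLike 𝕜] [NormedAddCommGroup F] [InnerProductSpace 𝕜 F]
  {T : F →ₗ[𝕜] F}

theorem inner_apply_sub_smul_of_mem_eigenspace (hT : T.IsSymmetric) {μ c : ℝ} {v : F}
    (hv : v ∈ eigenspace T (μ : 𝕜)) (w : F) :
    inner 𝕜 v (T w - (c : 𝕜) • w) = ((μ - c : ℝ) : 𝕜) * inner 𝕜 v w := by
  rw [inner_sub_right, inner_smul_right, ← hT v w, mem_eigenspace_iff.mp hv, inner_smul_left,
    RCLike.conj_ofReal, RCLike.ofReal_sub, sub_mul]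

variable [FiniteDimensional 𝕜 F]

theorem mul_norm_le_norm_apply_sub_smul_of_mem_orthogonal (hT : T.IsSymmetric) {c δ : ℝ}
    (hδ : 0 ≤ δ) {w : F} (hw : ∀ μ : ℝ, |μ - c| < δ → w ∈ (eigenspace T (μ : 𝕜))ᗮ) :
    δ * ‖w‖ ≤ ‖T w - (c : 𝕜) • w‖ := by
  set b := hT.eigenvectorBasis rfl
  set μ := hT.eigenvalues rfl
  have hcoeff (i) : δ ^ 2 * ‖inner 𝕜 (b i) w‖ ^ 2 ≤ ‖inner 𝕜 (b i) (T w - (c : 𝕜) • w)‖ ^ 2 := by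
    have hbi : b i ∈ eigenspace T (μ i : 𝕜) := (hT.hasEigenvector_eigenvectorBasis rfl i).1
    rw [hT.inner_apply_sub_smul_of_mem_eigenspace hbi, norm_mul, mul_pow, RCLike.norm_ofReal]
    by_cases hnear : |μ i - c| < δ
    · simp [Submodule.inner_right_of_mem_orthogonal hbi (hw _ hnear)]
    · gcongr
      exact not_lt.mp hnear
  have hsq : (δ * ‖w‖) ^ 2 ≤ ‖T w - (c : 𝕜) • w‖ ^ 2 := by
    rw [mul_pow, ← b.sum_sq_norm_inner_right, ← b.sum_sq_norm_inner_right, Finset.mul_sum]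
    exact Finset.sum_le_sum fun i _ ↦ hcoeff i
  exact (pow_le_pow_iff_left₀ (by positivity) (norm_nonneg _) two_ne_zero).mp hsq

end LinearMap.IsSymmetric

theorem Submodule.span_singleton_eq_of_finrank_eq_one {K V : Type*} [DivisionRing K]
    [AddCommGroup V] [Module K V] {S : Submodule K V} [FiniteDimensional K S] {v : V}
    (hv : v ∈ S) (hv0 : v ≠ 0) (hS : finrank K S = 1) : K ∙ v = S :=
  Submodule.eq_of_le_of_finrank_eq ((Submodule.span_singleton_le_iff_mem v S).mpr hv)
    (by rw [finrank_span_singleton hv0, hS])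

theorem norm_le_norm_inner_add_norm_sub_smul {𝕜 F : Type*} [RCLike 𝕜] [NormedAddCommGroup F]
    [InnerProductSpace 𝕜 F] {ψ : F} (hψ : ‖ψ‖ = 1) (φ : F) :
    ‖φ‖ ≤ ‖inner 𝕜 ψ φ‖ + ‖φ - inner 𝕜 ψ φ • ψ‖ :=
  calc ‖φ‖ = ‖inner 𝕜 ψ φ • ψ + (φ - inner 𝕜 ψ φ • ψ)‖ := by rw [add_sub_cancel]
    _ ≤ ‖inner 𝕜 ψ φ‖ + ‖φ - inner 𝕜 ψ φ • ψ‖ := by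
      grw [norm_add_le, norm_smul, hψ, mul_one]

theorem overlap_with_simple_eigenvector_general
    {V : Type*} [NormedAddCommGroup V] [InnerProductSpace ℂ V] [FiniteDimensional ℂ V]
    (H : V →ₗ[ℂ] V) (hH : H.IsSymmetric)
    (E δ ε : ℝ) (hδ : 0 < δ) (hε : 0 ≤ ε)
    (ψ : V) (hψ : ‖ψ‖ = 1) (hev : H ψ = (E : ℂ) • ψ)
    (hsimple : finrank ℂ
      (⨆ μ ∈ Set.Icc (E - δ) (E + δ),
        Module.End.eigenspace H (μ : ℂ) : Submodule ℂ V) = 1)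
    (φ₁ : V)
    (happrox : ‖H φ₁ - (E : ℂ) • φ₁‖ ≤ ε) :
    δ * ‖φ₁ - (inner ℂ ψ φ₁ : ℂ) • ψ‖
        ≤ ‖H (φ₁ - (inner ℂ ψ φ₁ : ℂ) • ψ) - (E : ℂ) • (φ₁ - (inner ℂ ψ φ₁ : ℂ) • ψ)‖ ∧
    ‖φ₁‖ - (10 / δ) * ε ≤ ‖(inner ℂ ψ φ₁ : ℂ)‖ := by
  set w := φ₁ - (inner ℂ ψ φ₁ : ℂ) • ψ
  have hmem (μ : ℝ) (hμ : μ ∈ Set.Icc (E - δ) (E + δ)) :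
      eigenspace H (μ : ℂ) ≤ ⨆ μ ∈ Set.Icc (E - δ) (E + δ), eigenspace H (μ : ℂ) :=
    le_iSup₂_of_le μ hμ le_rfl
  have hspan : ℂ ∙ ψ = ⨆ μ ∈ Set.Icc (E - δ) (E + δ), eigenspace H (μ : ℂ) :=
    Submodule.span_singleton_eq_of_finrank_eq_one
      (hmem E ⟨by linarith, by linarith⟩ (mem_eigenspace_iff.mpr hev))
      (norm_ne_zero_iff.mp (hψ ▸ one_ne_zero)) hsimple
  have hwψ : w ∈ (ℂ ∙ ψ)ᗮ := by
    rw [Submodule.mem_orthogonal_singleton_iff_inner_right, inner_sub_right, inner_smul_right,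
      inner_self_eq_norm_sq_to_K, hψ]
    simp
  have hgap : δ * ‖w‖ ≤ ‖H w - (E : ℂ) • w‖ := by
    refine hH.mul_norm_le_norm_apply_sub_smul_of_mem_orthogonal hδ.le fun μ hμ ↦ ?_
    obtain ⟨hlo, hhi⟩ := abs_lt.mp hμ
    exact Submodule.orthogonal_le (hspan ▸ hmem μ ⟨by linarith, by linarith⟩) hwψ
  refine ⟨hgap, ?_⟩
  have hwH : H w - (E : ℂ) • w = H φ₁ - (E : ℂ) • φ₁ := by
    simp only [w, map_sub, map_smul, hev]
    module
  have hw : ‖w‖ ≤ ε / δ := by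
    rw [le_div_iff₀ hδ, mul_comm]
    exact hgap.trans (hwH ▸ happrox)
  have h10 : ε / δ ≤ (10 / δ) * ε := by
    rw [div_mul_eq_mul_div]
    gcongr
    linarith
  linarith [norm_le_norm_inner_add_norm_sub_smul (𝕜 := ℂ) hψ φ₁]

/-- If `E` is a `δ`-simple eigenvalue of `H` with normalized eigenvector `ψ`, and `φ₁`
is an approximate eigenvector at energy `E` with error `ε < δ/20`, then the component
of `φ₁` orthogonal to `ψ` satisfies `‖(H−E)φ₁^⊥‖ ≥ δ‖φ₁^⊥‖`, and consequently
`|⟨ψ, φ₁⟩| ≥ ‖φ₁‖ − (10/δ)ε`. -/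
theorem overlap_with_simple_eigenvector
    {V : Type*} [NormedAddCommGroup V] [InnerProductSpace ℂ V] [FiniteDimensional ℂ V]
    (H : V →ₗ[ℂ] V) (hH : H.IsSymmetric)
    (E δ ε : ℝ) (hδ : 0 < δ) (hε : 0 ≤ ε) (hεδ : ε < δ / 20)
    (ψ : V) (hψ : ‖ψ‖ = 1) (hev : H ψ = (E : ℂ) • ψ)
    (hsimple : finrank ℂ
      (⨆ μ ∈ Set.Icc (E - δ) (E + δ),
        Module.End.eigenspace H (μ : ℂ) : Submodule ℂ V) = 1)
    (φ₁ : V) (hφ₁unit : ‖φ₁‖ = 1)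
    (happrox : ‖H φ₁ - (E : ℂ) • φ₁‖ ≤ ε) (hφ₁lb : 1 - ε ≤ ‖φ₁‖) :
    δ * ‖φ₁ - (inner ℂ ψ φ₁ : ℂ) • ψ‖
        ≤ ‖H (φ₁ - (inner ℂ ψ φ₁ : ℂ) • ψ) - (E : ℂ) • (φ₁ - (inner ℂ ψ φ₁ : ℂ) • ψ)‖ ∧
    ‖φ₁‖ - (10 / δ) * ε ≤ ‖(inner ℂ ψ φ₁ : ℂ)‖ :=
  overlap_with_simple_eigenvector_general H hH E δ ε hδ hε ψ hψ hev hsimple φ₁ happrox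
end

section
/- Let H be a self-adjoint operator on a Hilbert space, ψ a unit vector, E ∈ ℝ, and ρ > 0. Suppose every eigenvector φ of H with eigenvalue in [E − ρ, E + ρ] and ‖φ‖ = 1 satisfies ‖φ − cψ‖ ≤ θ for some unimodular constant c = c(φ), with θ < 1/√8. Then the spectral projection of H onto [E − ρ, E + ρ] has rank at most 1. -/
/-!
Two orthonormal vectors cannot both lie within `θ` of unimodular multiples of the same unit
vector `ψ`: expanding `⟪c₁ψ, c₂ψ⟫`, whose modulus is `1`, around `φ₁ ⊥ φ₂` leaves only error
terms, of total size at most `2θ + θ² < 1` when `θ < 1/√8`. Eigenspaces of a symmetric operator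
for distinct eigenvalues are orthogonal, and a second eigenvector for the same eigenvalue can be
orthogonalised against the first, so a window without orthonormal pairs of eigenvectors spans
at most a line.
-/

open Module Submodule Module.End

open scoped InnerProductSpace

section

variable {𝕜 V : Type*} [RCLike 𝕜] [NormedAddCommGroup V] [InnerProductSpace 𝕜 V]

lemma two_mul_add_sq_lt_one {θ : ℝ} (hθ : 0 ≤ θ) (hθ' : θ < 1 / Real.sqrt 8) :
    2 * θ + θ ^ 2 < 1 := by
  have h8 : Real.sqrt 8 ^ 2 = 8 := Real.sq_sqrt (by norm_num)
  have hθ8 : θ * Real.sqrt 8 < 1 := by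
    rwa [lt_div_iff₀ (Real.sqrt_pos.mpr (by norm_num))] at hθ'
  have hsq : (θ * Real.sqrt 8) ^ 2 < 1 := pow_lt_one₀ (by positivity) hθ8 two_ne_zero
  rw [mul_pow, h8] at hsq
  nlinarith

lemma one_le_of_orthogonal_near_smul {ψ φ₁ φ₂ : V} {c₁ c₂ : 𝕜} {θ : ℝ} (hθ : 0 ≤ θ)
    (hψ : ‖ψ‖ = 1) (h₁ : ‖φ₁‖ = 1) (h₂ : ‖φ₂‖ = 1) (horth : ⟪φ₁, φ₂⟫_𝕜 = 0)
    (hc₁ : ‖c₁‖ = 1) (hc₂ : ‖c₂‖ = 1) (hd₁ : ‖φ₁ - c₁ • ψ‖ ≤ θ) (hd₂ : ‖φ₂ - c₂ • ψ‖ ≤ θ) :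
    1 ≤ 2 * θ + θ ^ 2 := by
  set d₁ := φ₁ - c₁ • ψ
  set d₂ := φ₂ - c₂ • ψ
  have hexpand : ⟪c₁ • ψ, c₂ • ψ⟫_𝕜 = ⟪d₁, d₂⟫_𝕜 - ⟪φ₁, d₂⟫_𝕜 - ⟪d₁, φ₂⟫_𝕜 := by
    have e₁ : c₁ • ψ = φ₁ - d₁ := (sub_sub_cancel _ _).symm
    have e₂ : c₂ • ψ = φ₂ - d₂ := (sub_sub_cancel _ _).symm
    rw [e₁, e₂]
    simp only [inner_sub_left, inner_sub_right, horth]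
    ring
  have hunit : ‖⟪c₁ • ψ, c₂ • ψ⟫_𝕜‖ = 1 := by
    simp [inner_smul_left, inner_smul_right, inner_self_eq_norm_sq_to_K, hψ, hc₁, hc₂]
  calc (1 : ℝ) = ‖⟪d₁, d₂⟫_𝕜 - ⟪φ₁, d₂⟫_𝕜 - ⟪d₁, φ₂⟫_𝕜‖ := by rw [← hexpand, hunit]
    _ ≤ ‖d₁‖ * ‖d₂‖ + ‖φ₁‖ * ‖d₂‖ + ‖d₁‖ * ‖φ₂‖ := by
      refine (norm_sub_le _ _).trans (add_le_add ((norm_sub_le _ _).trans ?_) ?_)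
      · exact add_le_add (norm_inner_le_norm _ _) (norm_inner_le_norm _ _)
      · exact norm_inner_le_norm _ _
    _ ≤ θ * θ + θ + θ := by
      rw [h₁, h₂, one_mul, mul_one]
      gcongr
    _ = 2 * θ + θ ^ 2 := by ring

lemma le_span_singleton_of_orthogonal_eq_zero {K : Submodule 𝕜 V} {x : V} (hx : x ∈ K)
    (h : ∀ y ∈ K, ⟪x, y⟫_𝕜 = 0 → y = 0) : K ≤ 𝕜 ∙ x := by
  have hperp : (𝕜 ∙ x)ᗮ ⊓ K = ⊥ := by
    refine (Submodule.eq_bot_iff _).mpr fun y ⟨hyx, hyK⟩ => h y hyK ?_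
    exact mem_orthogonal_singleton_iff_inner_right.mp hyx
  rw [← sup_orthogonal_inf_of_hasOrthogonalProjection ((span_singleton_le_iff_mem x K).mpr hx),
    hperp, sup_bot_eq]

lemma eq_zero_or_eq_zero_of_inner_eq_zero_of_eigenvector {H : V →ₗ[𝕜] V} {S : Set 𝕜}
    (hS : ∀ μ ∈ S, ∀ ν ∈ S, ∀ φ φ' : V, H φ = μ • φ → H φ' = ν • φ' → ‖φ‖ = 1 → ‖φ'‖ = 1 →
      ⟪φ, φ'⟫_𝕜 ≠ 0)
    {μ ν : 𝕜} (hμ : μ ∈ S) (hν : ν ∈ S) {φ φ' : V} (hφ : φ ∈ eigenspace H μ)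
    (hφ' : φ' ∈ eigenspace H ν) (horth : ⟪φ, φ'⟫_𝕜 = 0) : φ = 0 ∨ φ' = 0 := by
  by_contra! hne
  refine hS μ hμ ν hν ((‖φ‖⁻¹ : 𝕜) • φ) ((‖φ'‖⁻¹ : 𝕜) • φ') ?_ ?_
    (norm_smul_inv_norm hne.1) (norm_smul_inv_norm hne.2) ?_
  · rw [map_smul, mem_eigenspace_iff.mp hφ, smul_comm]
  · rw [map_smul, mem_eigenspace_iff.mp hφ', smul_comm]
  · simp [inner_smul_left, inner_smul_right, horth]

lemma finrank_iSup_eigenspace_le_one [FiniteDimensional 𝕜 V] {H : V →ₗ[𝕜] V}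
    (hH : H.IsSymmetric) (S : Set 𝕜)
    (hS : ∀ μ ∈ S, ∀ ν ∈ S, ∀ φ φ' : V, H φ = μ • φ → H φ' = ν • φ' → ‖φ‖ = 1 → ‖φ'‖ = 1 →
      ⟪φ, φ'⟫_𝕜 ≠ 0) :
    finrank 𝕜 (⨆ μ ∈ S, eigenspace H μ : Submodule 𝕜 V) ≤ 1 := by
  by_cases hex : ∃ μ₀ ∈ S, ∃ φ₀ ∈ eigenspace H μ₀, φ₀ ≠ 0
  · obtain ⟨μ₀, hμ₀, φ₀, hφ₀, hφ₀ne⟩ := hex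
    have hle : ∀ μ ∈ S, eigenspace H μ ≤ 𝕜 ∙ φ₀ := by
      intro μ hμ
      by_cases hμμ₀ : μ = μ₀
      · subst hμμ₀
        exact le_span_singleton_of_orthogonal_eq_zero hφ₀ fun y hy hxy =>
          (eq_zero_or_eq_zero_of_inner_eq_zero_of_eigenvector hS hμ hμ hφ₀ hy hxy).resolve_left
            hφ₀ne
      · intro φ hφ
        have horth : ⟪φ₀, φ⟫_𝕜 = 0 :=
          (hH.orthogonalFamily_eigenspaces.isOrtho (Ne.symm hμμ₀)).inner_eq hφ₀ hφ
        rw [(eq_zero_or_eq_zero_of_inner_eq_zero_of_eigenvector hS hμ₀ hμ hφ₀ hφ horth).resolve_left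
          hφ₀ne]
        exact zero_mem _
    calc finrank 𝕜 (⨆ μ ∈ S, eigenspace H μ : Submodule 𝕜 V)
        ≤ finrank 𝕜 (𝕜 ∙ φ₀) := finrank_mono (iSup₂_le hle)
      _ = 1 := finrank_span_singleton hφ₀ne
  · push Not at hex
    have hbot : (⨆ μ ∈ S, eigenspace H μ : Submodule 𝕜 V) = ⊥ :=
      iSup₂_eq_bot.mpr fun μ hμ => (Submodule.eq_bot_iff _).mpr (hex μ hμ)
    rw [hbot, finrank_bot]
    exact zero_le_one

end

theorem rank_one_from_closeness_general
    {V : Type*} [NormedAddCommGroup V] [InnerProductSpace ℂ V] [FiniteDimensional ℂ V]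
    (H : V →ₗ[ℂ] V) (hH : H.IsSymmetric)
    (E ρ θ : ℝ) (hθ : 0 ≤ θ) (hθ' : θ < 1 / Real.sqrt 8)
    (ψ : V) (hψ : ‖ψ‖ = 1)
    (hclose : ∀ (φ : V) (μ : ℝ), μ ∈ Set.Icc (E - ρ) (E + ρ) → ‖φ‖ = 1 →
      H φ = (μ : ℂ) • φ → ∃ c : ℂ, ‖c‖ = 1 ∧ ‖φ - c • ψ‖ ≤ θ) :
    finrank ℂ
      (⨆ μ ∈ Set.Icc (E - ρ) (E + ρ),
        Module.End.eigenspace H (μ : ℂ) : Submodule ℂ V) ≤ 1 := by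
  have hwindow := finrank_iSup_eigenspace_le_one hH ((↑) '' Set.Icc (E - ρ) (E + ρ)) <| by
    rintro _ ⟨μ, hμ, rfl⟩ _ ⟨ν, hν, rfl⟩ φ φ' hφ hφ' h₁ h₂ horth
    obtain ⟨c₁, hc₁, hd₁⟩ := hclose φ μ hμ h₁ hφ
    obtain ⟨c₂, hc₂, hd₂⟩ := hclose φ' ν hν h₂ hφ'
    exact (two_mul_add_sq_lt_one hθ hθ').not_ge
      (one_le_of_orthogonal_near_smul hθ hψ h₁ h₂ horth hc₁ hc₂ hd₁ hd₂)
  rwa [iSup_image] at hwindow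

/-- Rank-one (simplicity) argument: if every normalized eigenvector of `H` with
eigenvalue in `[E − ρ, E + ρ]` is within `θ < 1/√8` of a unimodular multiple of a fixed
unit vector `ψ`, then the spectral projection of `H` onto `[E − ρ, E + ρ]` has rank at
most 1. -/
theorem rank_one_from_closeness
    {V : Type*} [NormedAddCommGroup V] [InnerProductSpace ℂ V] [FiniteDimensional ℂ V]
    (H : V →ₗ[ℂ] V) (hH : H.IsSymmetric)
    (E ρ θ : ℝ) (hρ : 0 < ρ) (hθ : 0 ≤ θ) (hθ' : θ < 1 / Real.sqrt 8)
    (ψ : V) (hψ : ‖ψ‖ = 1)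
    (hclose : ∀ (φ : V) (μ : ℝ), μ ∈ Set.Icc (E - ρ) (E + ρ) → ‖φ‖ = 1 →
      H φ = (μ : ℂ) • φ → ∃ c : ℂ, ‖c‖ = 1 ∧ ‖φ - c • ψ‖ ≤ θ) :
    finrank ℂ
      (⨆ μ ∈ Set.Icc (E - ρ) (E + ρ),
        Module.End.eigenspace H (μ : ℂ) : Submodule ℂ V) ≤ 1 :=
  rank_one_from_closeness_general H hH E ρ θ hθ hθ' ψ hψ hclose
end

section
/- Let H and H̃ be self-adjoint operators on a finite-dimensional Hilbert space with ‖H − H̃‖ ≤ δ/4. If E is a δ-simple eigenvalue of H (the spectral projection of H onto [E−δ, E+δ] has rank 1), then H̃ has exactly one eigenvalue Ẽ in [E − δ/2, E + δ/2], this eigenvalue is (δ/2)-simple for H̃, and |Ẽ − E| ≤ ‖H − H̃‖. -/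
/-!
Let `W` be the span of the eigenvectors of `H̃` with eigenvalues in `[E - 3δ/4, E + 3δ/4]` and `U`
that of the eigenvectors of `H` with eigenvalues in `[E - δ, E + δ]`. A nonzero `w ∈ W ⊓ Uᗮ` would
satisfy `‖(H̃ - E) w‖ ≤ (3δ/4) ‖w‖` and `‖(H - E) w‖ > δ ‖w‖`, which is incompatible with
`‖H - H̃‖ ≤ δ/4`; hence `dim W ≤ dim U = 1`. An eigenvector `v` of `H` for `E` satisfies
`‖(H̃ - E) v‖ ≤ ‖H - H̃‖ ‖v‖`, which forces an eigenvalue `Ẽ` of `H̃` within `‖H - H̃‖` of `E`.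
Since `dim W ≤ 1`, `Ẽ` is the only eigenvalue of `H̃` in `[E - 3δ/4, E + 3δ/4]`, an interval that
contains both `[E - δ/2, E + δ/2]` and `[Ẽ - δ/2, Ẽ + δ/2]`.
-/

open Module Module.End

section

variable {𝕜 V : Type*} [RCLike 𝕜] [NormedAddCommGroup V] [InnerProductSpace 𝕜 V]

/-- For symmetric `T`, the range of the spectral projection `𝟙_S(T)`. -/
def spectralSubspace (T : V →ₗ[𝕜] V) (S : Set ℝ) : Submodule 𝕜 V :=
  ⨆ μ ∈ S, eigenspace T (μ : 𝕜)

variable {T : V →ₗ[𝕜] V} {S S' : Set ℝ}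

theorem spectralSubspace_mono (h : S ⊆ S') : spectralSubspace T S ≤ spectralSubspace T S' :=
  biSup_mono h

theorem eigenspace_le_spectralSubspace {μ : ℝ} (hμ : μ ∈ S) :
    eigenspace T (μ : 𝕜) ≤ spectralSubspace T S :=
  le_biSup (fun μ : ℝ => eigenspace T (μ : 𝕜)) hμ

theorem spectralSubspace_ne_bot_iff :
    spectralSubspace T S ≠ ⊥ ↔ ∃ μ ∈ S, eigenspace T (μ : 𝕜) ≠ ⊥ := by
  simp only [spectralSubspace, ne_eq, iSup₂_eq_bot, not_forall, exists_prop]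

theorem ContinuousLinearMap.norm_sub_smul_le_add_norm_sub (H Ht : V →L[𝕜] V) (E : ℝ) (x : V) :
    ‖H x - (E : 𝕜) • x‖ ≤ ‖Ht x - (E : 𝕜) • x‖ + ‖H - Ht‖ * ‖x‖ :=
  calc ‖H x - (E : 𝕜) • x‖ = ‖(Ht x - (E : 𝕜) • x) + (H - Ht) x‖ := by
        rw [sub_apply, sub_add_sub_cancel']
    _ ≤ ‖Ht x - (E : 𝕜) • x‖ + ‖H - Ht‖ * ‖x‖ :=
        (norm_add_le _ _).trans (add_le_add le_rfl ((H - Ht).le_opNorm x))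

variable [FiniteDimensional 𝕜 V]

theorem eq_of_finrank_spectralSubspace_le_one (h : finrank 𝕜 (spectralSubspace T S) ≤ 1)
    {μ ν : ℝ} (hμ : μ ∈ S) (hν : ν ∈ S)
    (hμT : eigenspace T (μ : 𝕜) ≠ ⊥) (hνT : eigenspace T (ν : 𝕜) ≠ ⊥) : μ = ν := by
  by_contra hne
  have hdisj : Disjoint (eigenspace T (μ : 𝕜)) (eigenspace T (ν : 𝕜)) :=
    (eigenspaces_iSupIndep T).pairwiseDisjoint (RCLike.ofReal_injective.ne hne)
  have hsum := Submodule.finrank_sup_add_finrank_inf_eq (eigenspace T (μ : 𝕜)) (eigenspace T ν)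
  rw [hdisj.eq_bot, finrank_bot, add_zero] at hsum
  have hle : finrank 𝕜 ↥(eigenspace T (μ : 𝕜) ⊔ eigenspace T (ν : 𝕜)) ≤
      finrank 𝕜 (spectralSubspace T S) :=
    Submodule.finrank_mono (sup_le (eigenspace_le_spectralSubspace hμ)
      (eigenspace_le_spectralSubspace hν))
  have hμpos := Submodule.one_le_finrank_iff.mpr hμT
  have hνpos := Submodule.one_le_finrank_iff.mpr hνT
  omega

namespace LinearMap.IsSymmetric

theorem norm_sub_smul_sq_eq_sum (hT : T.IsSymmetric) {n : ℕ} (hn : finrank 𝕜 V = n) (E : ℝ)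
    (x : V) :
    ‖T x - (E : 𝕜) • x‖ ^ 2 =
      ∑ i, (hT.eigenvalues hn i - E) ^ 2 * ‖(hT.eigenvectorBasis hn).repr x i‖ ^ 2 := by
  rw [← (hT.eigenvectorBasis hn).repr.norm_map, EuclideanSpace.norm_sq_eq]
  refine Finset.sum_congr rfl fun i _ => ?_
  rw [map_sub, map_smul, PiLp.sub_apply, PiLp.smul_apply, hT.eigenvectorBasis_apply_self_apply,
    smul_eq_mul, ← sub_mul, ← RCLike.ofReal_sub, norm_mul, RCLike.norm_ofReal, mul_pow, sq_abs]

theorem eigenvectorBasis_repr_eq_zero_of_mem_spectralSubspace (hT : T.IsSymmetric) {n : ℕ}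
    (hn : finrank 𝕜 V = n) {S : Set ℝ} {x : V} (hx : x ∈ spectralSubspace T S)
    {i : Fin n} (hi : hT.eigenvalues hn i ∉ S) :
    (hT.eigenvectorBasis hn).repr x i = 0 := by
  have hortho : eigenspace T (hT.eigenvalues hn i : 𝕜) ⟂ spectralSubspace T S :=
    Submodule.isOrtho_iSup_right.mpr fun μ => Submodule.isOrtho_iSup_right.mpr fun hμ =>
      hT.orthogonalFamily_eigenspaces.isOrtho
        (RCLike.ofReal_injective.ne fun h => hi (h ▸ hμ))
  rw [OrthonormalBasis.repr_apply_apply]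
  exact hortho.inner_eq (mem_eigenspace_iff.mpr (hT.apply_eigenvectorBasis hn i)) hx

theorem eigenvectorBasis_repr_eq_zero_of_mem_orthogonal (hT : T.IsSymmetric) {n : ℕ}
    (hn : finrank 𝕜 V = n) {S : Set ℝ} {x : V} (hx : x ∈ (spectralSubspace T S)ᗮ)
    {i : Fin n} (hi : hT.eigenvalues hn i ∈ S) :
    (hT.eigenvectorBasis hn).repr x i = 0 := by
  rw [OrthonormalBasis.repr_apply_apply]
  exact Submodule.inner_right_of_mem_orthogonal (eigenspace_le_spectralSubspace hi
    (mem_eigenspace_iff.mpr (hT.apply_eigenvectorBasis hn i))) hx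

theorem norm_sub_smul_le_of_mem_spectralSubspace (hT : T.IsSymmetric) {E r : ℝ} (hr : 0 ≤ r)
    {x : V} (hx : x ∈ spectralSubspace T (Set.Icc (E - r) (E + r))) :
    ‖T x - (E : 𝕜) • x‖ ≤ r * ‖x‖ := by
  refine (pow_le_pow_iff_left₀ (norm_nonneg _) (by positivity) two_ne_zero).mp ?_
  rw [mul_pow, hT.norm_sub_smul_sq_eq_sum rfl, ← (hT.eigenvectorBasis rfl).repr.norm_map x,
    EuclideanSpace.norm_sq_eq, Finset.mul_sum]
  refine Finset.sum_le_sum fun i _ => ?_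
  by_cases hi : hT.eigenvalues rfl i ∈ Set.Icc (E - r) (E + r)
  · exact mul_le_mul_of_nonneg_right (sq_le_sq' (by linarith [hi.1]) (by linarith [hi.2]))
      (sq_nonneg _)
  · simp [hT.eigenvectorBasis_repr_eq_zero_of_mem_spectralSubspace rfl hx hi]

theorem lt_norm_sub_smul_of_mem_orthogonal (hT : T.IsSymmetric) {E r : ℝ} (hr : 0 ≤ r)
    {x : V} (hx : x ∈ (spectralSubspace T (Set.Icc (E - r) (E + r)))ᗮ) (hx0 : x ≠ 0) :
    r * ‖x‖ < ‖T x - (E : 𝕜) • x‖ := by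
  refine (pow_lt_pow_iff_left₀ (by positivity) (norm_nonneg _) two_ne_zero).mp ?_
  rw [mul_pow, hT.norm_sub_smul_sq_eq_sum rfl, ← (hT.eigenvectorBasis rfl).repr.norm_map x,
    EuclideanSpace.norm_sq_eq, Finset.mul_sum]
  set b := hT.eigenvectorBasis rfl
  have hterm : ∀ i, b.repr x i ≠ 0 →
      r ^ 2 * ‖b.repr x i‖ ^ 2 < (hT.eigenvalues rfl i - E) ^ 2 * ‖b.repr x i‖ ^ 2 := by
    intro i hi
    have hout := mt (hT.eigenvectorBasis_repr_eq_zero_of_mem_orthogonal rfl hx) hi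
    rw [Set.mem_Icc, not_and_or, not_le, not_le] at hout
    refine mul_lt_mul_of_pos_right ?_ (by positivity)
    rcases hout with h | h <;> nlinarith
  obtain ⟨j, hj⟩ : ∃ j, b.repr x j ≠ 0 := by
    by_contra! h
    exact hx0 (b.repr.injective (by ext j; simp [h]))
  refine Finset.sum_lt_sum (fun i _ => ?_) ⟨j, Finset.mem_univ _, hterm j hj⟩
  by_cases hi : b.repr x i = 0
  · simp [hi]
  · exact (hterm i hi).le

theorem exists_eigenvalue_mem_Icc_of_norm_sub_smul_le (hT : T.IsSymmetric) {E r : ℝ} (hr : 0 ≤ r)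
    {x : V} (hx0 : x ≠ 0) (hx : ‖T x - (E : 𝕜) • x‖ ≤ r * ‖x‖) :
    ∃ μ ∈ Set.Icc (E - r) (E + r), eigenspace T (μ : 𝕜) ≠ ⊥ := by
  refine spectralSubspace_ne_bot_iff.mp fun hbot => ?_
  have hx' : x ∈ (spectralSubspace T (Set.Icc (E - r) (E + r)))ᗮ := by
    rw [hbot, Submodule.bot_orthogonal_eq_top]
    exact Submodule.mem_top
  exact (hT.lt_norm_sub_smul_of_mem_orthogonal hr hx' hx0).not_ge hx

end LinearMap.IsSymmetric

theorem Submodule.inf_orthogonal_ne_bot_of_finrank_lt {U W : Submodule 𝕜 V}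
    (h : finrank 𝕜 U < finrank 𝕜 W) : W ⊓ Uᗮ ≠ ⊥ := by
  intro hbot
  have hsum := Submodule.finrank_sup_add_finrank_inf_eq W Uᗮ
  have hU := U.finrank_add_finrank_orthogonal
  have hsup := Submodule.finrank_le (W ⊔ Uᗮ)
  rw [hbot, finrank_bot] at hsum
  omega

theorem finrank_spectralSubspace_Icc_le_add_norm_sub {H Ht : V →L[𝕜] V}
    (hH : (H : V →ₗ[𝕜] V).IsSymmetric) (hHt : (Ht : V →ₗ[𝕜] V).IsSymmetric) {E r : ℝ}
    (hr : 0 ≤ r) :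
    finrank 𝕜 (spectralSubspace (Ht : V →ₗ[𝕜] V) (Set.Icc (E - r) (E + r))) ≤
      finrank 𝕜 (spectralSubspace (H : V →ₗ[𝕜] V)
        (Set.Icc (E - (r + ‖H - Ht‖)) (E + (r + ‖H - Ht‖)))) := by
  by_contra! hlt
  obtain ⟨w, ⟨hwHt, hwH⟩, hw0⟩ :=
    Submodule.exists_mem_ne_zero_of_ne_bot (Submodule.inf_orthogonal_ne_bot_of_finrank_lt hlt)
  have hnear := hHt.norm_sub_smul_le_of_mem_spectralSubspace hr hwHt
  have hfar := hH.lt_norm_sub_smul_of_mem_orthogonal (by positivity) hwH hw0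
  have hpert := H.norm_sub_smul_le_add_norm_sub Ht E w
  change r * ‖w‖ ≥ ‖Ht w - (E : 𝕜) • w‖ at hnear
  change _ < ‖H w - (E : 𝕜) • w‖ at hfar
  linarith

end

theorem simple_eigenvalue_stability_general
    {V : Type*} [NormedAddCommGroup V] [InnerProductSpace ℂ V] [FiniteDimensional ℂ V]
    (H Ht : V →L[ℂ] V) (hH : IsSelfAdjoint H) (hHt : IsSelfAdjoint Ht)
    (E δ : ℝ) (hpert : ‖H - Ht‖ ≤ δ / 4)
    (hevE : Module.End.eigenspace (H : V →ₗ[ℂ] V) (E : ℂ) ≠ ⊥)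
    (hsimple : finrank ℂ
      (⨆ μ ∈ Set.Icc (E - δ) (E + δ),
        Module.End.eigenspace (H : V →ₗ[ℂ] V) (μ : ℂ) : Submodule ℂ V) = 1) :
    ∃ Et : ℝ, Et ∈ Set.Icc (E - δ / 2) (E + δ / 2) ∧
      Module.End.eigenspace (Ht : V →ₗ[ℂ] V) (Et : ℂ) ≠ ⊥ ∧
      (∀ μ ∈ Set.Icc (E - δ / 2) (E + δ / 2),
        Module.End.eigenspace (Ht : V →ₗ[ℂ] V) (μ : ℂ) ≠ ⊥ → μ = Et) ∧
      finrank ℂ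
        (⨆ μ ∈ Set.Icc (Et - δ / 2) (Et + δ / 2),
          Module.End.eigenspace (Ht : V →ₗ[ℂ] V) (μ : ℂ) : Submodule ℂ V) = 1 ∧
      |Et - E| ≤ ‖H - Ht‖ := by
  have hHs := ContinuousLinearMap.isSelfAdjoint_iff_isSymmetric.mp hH
  have hHts := ContinuousLinearMap.isSelfAdjoint_iff_isSymmetric.mp hHt
  have hε := norm_nonneg (H - Ht)
  have hW : finrank ℂ (spectralSubspace (Ht : V →ₗ[ℂ] V)
      (Set.Icc (E - 3 * δ / 4) (E + 3 * δ / 4))) ≤ 1 :=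
    (finrank_spectralSubspace_Icc_le_add_norm_sub hHs hHts (by linarith)).trans
      ((Submodule.finrank_mono (spectralSubspace_mono
        (Set.Icc_subset_Icc (by linarith) (by linarith)))).trans hsimple.le)
  obtain ⟨v, hv, hv0⟩ := Submodule.exists_mem_ne_zero_of_ne_bot hevE
  have hvHt : ‖Ht v - (E : ℂ) • v‖ ≤ ‖H - Ht‖ * ‖v‖ := by
    have := Ht.norm_sub_smul_le_add_norm_sub H E v
    rwa [RCLike.ofReal_eq_complex_ofReal, show H v = (E : ℂ) • v from mem_eigenspace_iff.mp hv,
      sub_self, norm_zero, zero_add, norm_sub_rev Ht H] at this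
  obtain ⟨Et, ⟨hEt₁, hEt₂⟩, hEtT⟩ :=
    hHts.exists_eigenvalue_mem_Icc_of_norm_sub_smul_le hε hv0 hvHt
  have huniq : ∀ μ ∈ Set.Icc (E - 3 * δ / 4) (E + 3 * δ / 4),
      eigenspace (Ht : V →ₗ[ℂ] V) (μ : ℂ) ≠ ⊥ → μ = Et := fun μ hμ hμT =>
    eq_of_finrank_spectralSubspace_le_one hW hμ ⟨by linarith, by linarith⟩ hμT hEtT
  refine ⟨Et, ⟨by linarith, by linarith⟩, hEtT,
    fun μ hμ => huniq μ (Set.Icc_subset_Icc (by linarith) (by linarith) hμ), ?_,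
    abs_sub_le_iff.mpr ⟨by linarith, by linarith⟩⟩
  refine le_antisymm ((Submodule.finrank_mono (spectralSubspace_mono
    (Set.Icc_subset_Icc (by linarith) (by linarith)))).trans hW) ?_
  exact Submodule.one_le_finrank_iff.mpr
    (spectralSubspace_ne_bot_iff.mpr ⟨Et, ⟨by linarith, by linarith⟩, hEtT⟩)

/-- Stability of `δ`-simple eigenvalues: if `‖H − H̃‖ ≤ δ/4` and `E` is a `δ`-simple
eigenvalue of `H`, then `H̃` has exactly one eigenvalue `Ẽ` in `[E − δ/2, E + δ/2]`,
this eigenvalue is `(δ/2)`-simple for `H̃`, and `|Ẽ − E| ≤ ‖H − H̃‖`. -/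
theorem simple_eigenvalue_stability
    {V : Type*} [NormedAddCommGroup V] [InnerProductSpace ℂ V] [FiniteDimensional ℂ V]
    (H Ht : V →L[ℂ] V) (hH : IsSelfAdjoint H) (hHt : IsSelfAdjoint Ht)
    (E δ : ℝ) (hδ : 0 < δ) (hpert : ‖H - Ht‖ ≤ δ / 4)
    (hevE : Module.End.eigenspace (H : V →ₗ[ℂ] V) (E : ℂ) ≠ ⊥)
    (hsimple : finrank ℂ
      (⨆ μ ∈ Set.Icc (E - δ) (E + δ),
        Module.End.eigenspace (H : V →ₗ[ℂ] V) (μ : ℂ) : Submodule ℂ V) = 1) :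
    ∃ Et : ℝ, Et ∈ Set.Icc (E - δ / 2) (E + δ / 2) ∧
      Module.End.eigenspace (Ht : V →ₗ[ℂ] V) (Et : ℂ) ≠ ⊥ ∧
      (∀ μ ∈ Set.Icc (E - δ / 2) (E + δ / 2),
        Module.End.eigenspace (Ht : V →ₗ[ℂ] V) (μ : ℂ) ≠ ⊥ → μ = Et) ∧
      finrank ℂ
        (⨆ μ ∈ Set.Icc (Et - δ / 2) (Et + δ / 2),
          Module.End.eigenspace (Ht : V →ₗ[ℂ] V) (μ : ℂ) : Submodule ℂ V) = 1 ∧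
      |Et - E| ≤ ‖H - Ht‖ :=
  simple_eigenvalue_stability_general H Ht hH hHt E δ hpert hevE hsimple
end

section
/- Let H be a bounded self-adjoint operator on L²(𝕋^d) and suppose there exist a measurable set G ⊆ 𝕋^d with |G| > 0, a bounded measurable function γ : G → ℝ, and a bounded operator Q : L²(𝕋^d) → L²(𝕋^d) with Q*Q = QQ* = χ_G (multiplication by the indicator of G) such that HQ = QΓ where Γ is multiplication by χ_G·γ. If moreover |{x ∈ G : γ(x) ∈ [E−s, E+s]}| ≤ Cs for all E ∈ ℝ and s > 0, then H has nonempty absolutely continuous spectrum; more precisely, the essential range of γ on G is contained in σ_ac(H). -/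
open MeasureTheory Set
open scoped ENNReal NNReal

/-!
The intertwining `H Q = Q Γ` and `Q* Q = χ_G` turn the moments `⟪Q g, Hⁿ Q g⟫` into
`∫_G γⁿ |g|²`, the moments of the pushforward of `|g|² dx` on `G` under `γ`. The sublevel bound
says that `γ` pushes Lebesgue measure on `G` forward to a measure of density at most `C / 2`,
so this spectral measure is absolutely continuous. For `E` in the essential range of `γ`, the
indicators of `{x ∈ G | |γ x - E| ≤ s}` are approximate eigenvectors of `Γ`, and `Q`, isometric
on them, carries them to approximate eigenvectors of `H`.
-/

theorem StieltjesFunction.le_measure_of_forall_Ioc {m : Measure ℝ} (f : StieltjesFunction ℝ)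
    (h : ∀ a b, a ≤ b → m (Ioc a b) ≤ ENNReal.ofReal (f b - f a)) : m ≤ f.measure := by
  suffices m.toOuterMeasure ≤ f.outer by
    rw [StieltjesFunction.measure_def]
    exact Measure.le_iff'.2 this
  refine OuterMeasure.le_ofFunction.2 fun s => ?_
  rw [f.length_eq]
  refine le_iInf₂ fun a b => le_iInf fun hs => ?_
  have hs : s ⊆ Ioc a b := by simpa [botSet] using hs
  rcases le_or_gt a b with hab | hab
  · exact (measure_mono hs).trans (h a b hab)
  · simp [subset_empty_iff.1 (hs.trans (Ioc_eq_empty (not_lt.2 hab.le)).subset)]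

theorem MeasureTheory.Measure.le_smul_volume_of_forall_Ioc {m : Measure ℝ} (C : ℝ)
    (h : ∀ a b, a ≤ b → m (Ioc a b) ≤ ENNReal.ofReal (C * (b - a))) :
    m ≤ ENNReal.ofReal C • volume := by
  have : ENNReal.ofReal C • (volume : Measure ℝ) =
      (C.toNNReal • StieltjesFunction.id).measure := by
    rw [StieltjesFunction.measure_smul, ← Real.volume_eq_stieltjes_id]; rfl
  rw [this]
  refine StieltjesFunction.le_measure_of_forall_Ioc _ fun a b hab => (h a b hab).trans ?_
  refine ENNReal.ofReal_le_ofReal ?_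
  show C * (b - a) ≤ C.toNNReal * b - C.toNNReal * a
  rw [← mul_sub]
  exact mul_le_mul_of_nonneg_right (Real.le_coe_toNNReal C) (sub_nonneg.2 hab)

theorem MeasureTheory.Measure.map_le_smul_volume_of_measure_preimage_Icc_le {α : Type*}
    [MeasurableSpace α] {μ : Measure α} {γ : α → ℝ} (hγ : Measurable γ) (C : ℝ)
    (h : ∀ E s, 0 < s → μ (γ ⁻¹' Icc (E - s) (E + s)) ≤ ENNReal.ofReal (C * s)) :
    μ.map γ ≤ ENNReal.ofReal (C / 2) • volume := by
  refine Measure.le_smul_volume_of_forall_Ioc _ fun a b hab => ?_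
  rcases hab.eq_or_lt with rfl | hab
  · simp
  have hIcc : Icc a b = Icc ((a + b) / 2 - (b - a) / 2) ((a + b) / 2 + (b - a) / 2) := by
    congr 1 <;> ring
  calc μ.map γ (Ioc a b) ≤ μ.map γ (Icc a b) := measure_mono Ioc_subset_Icc_self
    _ = μ (γ ⁻¹' Icc a b) := Measure.map_apply hγ measurableSet_Icc
    _ ≤ ENNReal.ofReal (C * ((b - a) / 2)) := hIcc ▸ h _ _ (by linarith)
    _ = ENNReal.ofReal (C / 2 * (b - a)) := by ring_nf

section WeightedPushforward

variable {α : Type*} [MeasurableSpace α]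

/-- `γ_* (|g|² μ)`; for `μ = volume.restrict G` it is the spectral measure of `H` at `Q g`. -/
noncomputable def weightedPushforward (μ : Measure α) (γ : α → ℝ) (g : α → ℂ) : Measure ℝ :=
  (μ.withDensity fun x => ENNReal.ofReal (‖g x‖ ^ 2)).map γ

variable {μ : Measure α} {γ : α → ℝ} {g : α → ℂ}

theorem weightedPushforward_absolutelyContinuous (hγ : Measurable γ) :
    weightedPushforward μ γ g ≪ μ.map γ :=
  (withDensity_absolutelyContinuous _ _).map hγ

theorem isFiniteMeasure_weightedPushforward (hg : MemLp g 2 μ) :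
    IsFiniteMeasure (weightedPushforward μ γ g) := by
  have := isFiniteMeasure_withDensity_ofReal
    ((memLp_two_iff_integrable_sq_norm hg.1).1 hg).hasFiniteIntegral
  unfold weightedPushforward
  infer_instance

theorem integral_pow_weightedPushforward (hγ : Measurable γ) (hg : AEStronglyMeasurable g μ)
    (n : ℕ) : ∫ t, t ^ n ∂weightedPushforward μ γ g = ∫ x, γ x ^ n * ‖g x‖ ^ 2 ∂μ := by
  rw [weightedPushforward, integral_map hγ.aemeasurable (continuous_pow n).aestronglyMeasurable,
    integral_withDensity_eq_integral_toReal_smul₀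
      (hg.norm.aemeasurable.pow_const 2).ennreal_ofReal]
  · refine integral_congr_ae (Filter.Eventually.of_forall fun x => ?_)
    simp [mul_comm]
  · exact Filter.Eventually.of_forall fun x => ENNReal.ofReal_lt_top

end WeightedPushforward

theorem ContinuousLinearMap.inner_apply_pow_apply_of_comp_eq {𝕜 E : Type*} [RCLike 𝕜]
    [NormedAddCommGroup E] [InnerProductSpace 𝕜 E] [CompleteSpace E] {H Q Γ : E →L[𝕜] E}
    (hint : H.comp Q = Q.comp Γ) (n : ℕ) (g : E) :
    inner 𝕜 (Q g) ((H ^ n) (Q g)) = inner 𝕜 ((adjoint Q).comp Q g) ((Γ ^ n) g) := by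
  have hsc : SemiconjBy Q Γ H := hint.symm
  have hpow : (H ^ n) * Q = Q * Γ ^ n := (hsc.pow_right n).symm
  rw [← mul_apply_eq_comp, hpow, mul_apply_eq_comp, comp_apply, adjoint_inner_left]

theorem ContinuousLinearMap.norm_apply_eq_of_adjoint_comp_self_apply {𝕜 E F : Type*} [RCLike 𝕜]
    [NormedAddCommGroup E] [InnerProductSpace 𝕜 E] [CompleteSpace E] [NormedAddCommGroup F]
    [InnerProductSpace 𝕜 F] [CompleteSpace F] {A : E →L[𝕜] F} {x : E}
    (hx : (adjoint A).comp A x = x) : ‖A x‖ = ‖x‖ := by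
  rw [apply_norm_eq_sqrt_inner_adjoint_left, hx, ← norm_sq_eq_re_inner,
    Real.sqrt_sq (norm_nonneg _)]

theorem ContinuousLinearMap.mem_spectrum_of_forall_exists_norm_sub_smul_le {𝕜 E : Type*}
    [NontriviallyNormedField 𝕜] [NormedAddCommGroup E] [NormedSpace 𝕜 E] (T : E →L[𝕜] E)
    (c : 𝕜) (h : ∀ ε > 0, ∃ v, v ≠ 0 ∧ ‖T v - c • v‖ ≤ ε * ‖v‖) : c ∈ spectrum 𝕜 T := by
  rw [spectrum.mem_iff]
  rintro ⟨u, hu⟩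
  set R : E →L[𝕜] E := ↑u⁻¹
  obtain ⟨v, hv, hTv⟩ := h (1 / (‖R‖ + 1)) (by positivity)
  have hinv : R (c • v - T v) = v := by
    have huv : c • v - T v = (u : E →L[𝕜] E) v := by simp [hu, Algebra.algebraMap_eq_smul_one]
    rw [huv, ← mul_apply_eq_comp, Units.inv_mul, one_apply_eq_self]
  have : ‖v‖ ≤ ‖R‖ / (‖R‖ + 1) * ‖v‖ := calc
    ‖v‖ = ‖R (c • v - T v)‖ := by rw [hinv]
    _ ≤ ‖R‖ * ‖T v - c • v‖ := by rw [norm_sub_rev]; exact R.le_opNorm _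
    _ ≤ ‖R‖ * (1 / (‖R‖ + 1) * ‖v‖) := by gcongr
    _ = ‖R‖ / (‖R‖ + 1) * ‖v‖ := by ring
  have hR : ‖R‖ / (‖R‖ + 1) < 1 := (div_lt_one (by positivity)).2 (lt_add_one _)
  nlinarith [norm_pos_iff.2 hv]

section Multiplication

variable {α 𝕜 : Type*} [MeasurableSpace α] {μ : Measure α} [RCLike 𝕜] {p : ℝ≥0∞} [Fact (1 ≤ p)]

theorem MeasureTheory.Lp.pow_apply_ae_eq_mul {T : Lp 𝕜 p μ →L[𝕜] Lp 𝕜 p μ} {φ : α → 𝕜}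
    (hT : ∀ g, T g =ᵐ[μ] fun x => φ x * g x) (n : ℕ) (g : Lp 𝕜 p μ) :
    (T ^ n) g =ᵐ[μ] fun x => φ x ^ n * g x := by
  induction n with
  | zero => simp
  | succ n ih =>
    rw [pow_succ', mul_apply_eq_comp]
    filter_upwards [hT ((T ^ n) g), ih] with x hTx hx
    rw [hTx, hx, pow_succ']
    ring

theorem MeasureTheory.Lp.norm_apply_sub_smul_indicatorConstLp_le {T : Lp 𝕜 p μ →L[𝕜] Lp 𝕜 p μ}
    {φ : α → 𝕜} (hT : ∀ g, T g =ᵐ[μ] fun x => φ x * g x) {A : Set α} (hA : MeasurableSet A)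
    (hμA : μ A ≠ ∞) {c : 𝕜} {s : ℝ} (hs : ∀ x ∈ A, ‖φ x - c‖ ≤ s) :
    ‖T (indicatorConstLp p hA hμA (1 : 𝕜)) - c • indicatorConstLp p hA hμA (1 : 𝕜)‖
      ≤ s * ‖indicatorConstLp p hA hμA (1 : 𝕜)‖ := by
  set f := indicatorConstLp p hA hμA (1 : 𝕜)
  refine Lp.norm_le_mul_norm_of_ae_le_mul ?_
  filter_upwards [Lp.coeFn_sub (T f) (c • f), Lp.coeFn_smul c f, hT f,
    indicatorConstLp_coeFn (p := p) (hs := hA) (hμs := hμA) (c := (1 : 𝕜))]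
    with x hsub hsmul hTf hf
  rw [hsub, Pi.sub_apply, hsmul, Pi.smul_apply, hTf, hf, smul_eq_mul, ← sub_mul, norm_mul]
  by_cases hx : x ∈ A
  · simpa [hx] using hs x hx
  · simp [hx]

end Multiplication

theorem MeasureTheory.L2.re_inner_indicator_mul_pow_eq_setIntegral {α : Type*} [MeasurableSpace α]
    {μ : Measure α} {G : Set α} (hG : MeasurableSet G) {γ : α → ℝ}
    {P Γ : Lp ℂ 2 μ →L[ℂ] Lp ℂ 2 μ}
    (hP : ∀ g, P g =ᵐ[μ] fun x => G.indicator (fun _ => (1 : ℂ)) x * g x)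
    (hΓ : ∀ g, Γ g =ᵐ[μ] fun x => G.indicator (fun y => (γ y : ℂ)) x * g x)
    (n : ℕ) (g : Lp ℂ 2 μ) :
    (inner ℂ (P g) ((Γ ^ n) g)).re = ∫ x in G, γ x ^ n * ‖g x‖ ^ 2 ∂μ := by
  have hpt : (fun x => RCLike.re (inner ℂ (P g x) ((Γ ^ n) g x)))
      =ᵐ[μ] G.indicator fun x => γ x ^ n * ‖g x‖ ^ 2 := by
    filter_upwards [hP g, Lp.pow_apply_ae_eq_mul hΓ n g] with x hPx hΓx
    rw [hPx, hΓx]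
    by_cases hx : x ∈ G
    · simp [hx, ← Complex.normSq_eq_norm_sq, Complex.normSq_apply, ← Complex.ofReal_pow]
      ring
    · simp [hx]
  rw [L2.inner_def, ← RCLike.re_to_complex, ← integral_re (L2.integrable_inner _ _),
    integral_congr_ae hpt, integral_indicator hG]

theorem MeasureTheory.L2.mem_spectrum_of_intertwining {α : Type*} [MeasurableSpace α]
    {μ : Measure α} [IsFiniteMeasure μ] {G : Set α} (hG : MeasurableSet G) {γ : α → ℝ}
    (hγ : Measurable γ) {H Q P Γ : Lp ℂ 2 μ →L[ℂ] Lp ℂ 2 μ}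
    (hP : ∀ g, P g =ᵐ[μ] fun x => G.indicator (fun _ => (1 : ℂ)) x * g x)
    (hΓ : ∀ g, Γ g =ᵐ[μ] fun x => G.indicator (fun y => (γ y : ℂ)) x * g x)
    (hQQ : (ContinuousLinearMap.adjoint Q).comp Q = P) (hint : H.comp Q = Q.comp Γ) (E : ℝ)
    (hE : ∀ s > (0 : ℝ), 0 < μ {x ∈ G | γ x ∈ Icc (E - s) (E + s)}) :
    (E : ℂ) ∈ spectrum ℂ H := by
  refine H.mem_spectrum_of_forall_exists_norm_sub_smul_le _ fun ε hε => ?_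
  set s := ε / (‖Q‖ + 1)
  have hs : 0 < s := by positivity
  set A := {x ∈ G | γ x ∈ Icc (E - s) (E + s)}
  have hA : MeasurableSet A := hG.inter (hγ measurableSet_Icc)
  set f := indicatorConstLp 2 hA (measure_ne_top μ A) (1 : ℂ)
  have hf : 0 < ‖f‖ := by
    rw [norm_indicatorConstLp two_ne_zero ENNReal.ofNat_ne_top, norm_one, one_mul]
    exact Real.rpow_pos_of_pos (ENNReal.toReal_pos (hE s hs).ne' (measure_ne_top μ A)) _
  have hPf : P f = f := by
    ext1
    filter_upwards [hP f, indicatorConstLp_coeFn (p := 2) (hs := hA) (hμs := measure_ne_top μ A)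
      (c := (1 : ℂ))] with x hPx hfx
    rw [hPx, hfx]
    by_cases hx : x ∈ A
    · rw [indicator_of_mem hx, indicator_of_mem hx.1, one_mul]
    · rw [indicator_of_notMem hx, mul_zero]
  have hQf : ‖Q f‖ = ‖f‖ := ContinuousLinearMap.norm_apply_eq_of_adjoint_comp_self_apply
    (by rw [hQQ, hPf])
  have hΓf : ‖Γ f - (E : ℂ) • f‖ ≤ s * ‖f‖ := by
    refine Lp.norm_apply_sub_smul_indicatorConstLp_le hΓ hA _ fun x hx => ?_
    rw [indicator_of_mem hx.1, ← Complex.ofReal_sub, Complex.norm_real, Real.norm_eq_abs, abs_le]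
    constructor <;> linarith [hx.2.1, hx.2.2]
  refine ⟨Q f, norm_pos_iff.1 (hQf ▸ hf), ?_⟩
  calc ‖H (Q f) - (E : ℂ) • Q f‖ = ‖Q (Γ f - (E : ℂ) • f)‖ := by
        rw [map_sub, map_smul, ← ContinuousLinearMap.comp_apply, hint]; rfl
    _ ≤ ‖Q‖ * (s * ‖f‖) := (Q.le_opNorm _).trans (by gcongr)
    _ ≤ ε * ‖Q f‖ := by
        rw [hQf, ← mul_assoc]
        gcongr
        rw [mul_div_assoc']
        exact (div_le_iff₀ (by positivity)).2 (by nlinarith)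

theorem ac_spectrum_from_intertwining_general
    {d : ℕ}
    (H Q P Γop : Lp ℂ 2 (volume : Measure (Fin d → AddCircle (1 : ℝ))) →L[ℂ]
          Lp ℂ 2 (volume : Measure (Fin d → AddCircle (1 : ℝ))))
    (G : Set (Fin d → AddCircle (1 : ℝ))) (hGmeas : MeasurableSet G)
    (γ : (Fin d → AddCircle (1 : ℝ)) → ℝ) (hγmeas : Measurable γ)
    (hP : ∀ g, (P g : (Fin d → AddCircle (1 : ℝ)) → ℂ)
      =ᵐ[volume] fun x => Set.indicator G (fun _ => (1 : ℂ)) x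
          * (g : (Fin d → AddCircle (1 : ℝ)) → ℂ) x)
    (hΓ : ∀ g, (Γop g : (Fin d → AddCircle (1 : ℝ)) → ℂ)
      =ᵐ[volume] fun x => Set.indicator G (fun y => (γ y : ℂ)) x
          * (g : (Fin d → AddCircle (1 : ℝ)) → ℂ) x)
    (hQQ : (ContinuousLinearMap.adjoint Q).comp Q = P)
    (hint : H.comp Q = Q.comp Γop)
    (C : ℝ)
    (hsub : ∀ (E s : ℝ), 0 < s →
      volume {x ∈ G | γ x ∈ Set.Icc (E - s) (E + s)} ≤ ENNReal.ofReal (C * s)) :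
    (∀ g, ∃ ν : Measure ℝ, IsFiniteMeasure ν ∧ ν ≪ (volume : Measure ℝ) ∧
      ∀ n : ℕ, ∫ t : ℝ, t ^ n ∂ν
        = ((inner ℂ (Q g) ((H ^ n) (Q g)) : ℂ)).re) ∧
    (∀ E : ℝ, (∀ s > (0 : ℝ),
        0 < volume {x ∈ G | γ x ∈ Set.Icc (E - s) (E + s)}) →
      (E : ℂ) ∈ spectrum ℂ H) := by
  refine ⟨fun g => ?_, L2.mem_spectrum_of_intertwining hGmeas hγmeas hP hΓ hQQ hint⟩
  have hac : (volume.restrict G).map γ ≪ volume := Measure.absolutelyContinuous_of_le_smul <|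
    Measure.map_le_smul_volume_of_measure_preimage_Icc_le hγmeas C fun E s hs => by
      rw [Measure.restrict_apply (hγmeas measurableSet_Icc), inter_comm]
      exact hsub E s hs
  refine ⟨weightedPushforward (volume.restrict G) γ g,
    isFiniteMeasure_weightedPushforward ((Lp.memLp g).restrict G),
    (weightedPushforward_absolutelyContinuous hγmeas).trans hac, fun n => ?_⟩
  rw [integral_pow_weightedPushforward hγmeas (Lp.aestronglyMeasurable g).restrict,
    ContinuousLinearMap.inner_apply_pow_apply_of_comp_eq hint, hQQ,
    L2.re_inner_indicator_mul_pow_eq_setIntegral hGmeas hP hΓ]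

/-- If `Q` is a partial isometry on `L²(𝕋^d)` with `Q*Q = QQ* = χ_G` intertwining the
bounded self-adjoint operator `H` with multiplication by `γ`, and the sublevel sets of
`γ` have measure linear in `s`, then the spectral measure of every vector in the range
of `Q` is absolutely continuous, and the essential range of `γ` on `G` is contained in
the spectrum of `H`; in particular `H` has absolutely continuous spectrum. -/
theorem ac_spectrum_from_intertwining
    {d : ℕ}
    (H Q P Γop : Lp ℂ 2 (volume : Measure (Fin d → AddCircle (1 : ℝ))) →L[ℂ]
          Lp ℂ 2 (volume : Measure (Fin d → AddCircle (1 : ℝ))))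
    (hH : IsSelfAdjoint H)
    (G : Set (Fin d → AddCircle (1 : ℝ))) (hGmeas : MeasurableSet G)
    (hGpos : 0 < volume G)
    (γ : (Fin d → AddCircle (1 : ℝ)) → ℝ) (hγmeas : Measurable γ)
    (Cγ : ℝ) (hγbd : ∀ x, |γ x| ≤ Cγ)
    (hP : ∀ g, (P g : (Fin d → AddCircle (1 : ℝ)) → ℂ)
      =ᵐ[volume] fun x => Set.indicator G (fun _ => (1 : ℂ)) x
          * (g : (Fin d → AddCircle (1 : ℝ)) → ℂ) x)
    (hΓ : ∀ g, (Γop g : (Fin d → AddCircle (1 : ℝ)) → ℂ)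
      =ᵐ[volume] fun x => Set.indicator G (fun y => (γ y : ℂ)) x
          * (g : (Fin d → AddCircle (1 : ℝ)) → ℂ) x)
    (hQQ : (ContinuousLinearMap.adjoint Q).comp Q = P)
    (hQQ' : Q.comp (ContinuousLinearMap.adjoint Q) = P)
    (hint : H.comp Q = Q.comp Γop)
    (C : ℝ) (hC : 0 < C)
    (hsub : ∀ (E s : ℝ), 0 < s →
      volume {x ∈ G | γ x ∈ Set.Icc (E - s) (E + s)} ≤ ENNReal.ofReal (C * s)) :
    (∀ g, ∃ ν : Measure ℝ, IsFiniteMeasure ν ∧ ν ≪ (volume : Measure ℝ) ∧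
      ∀ n : ℕ, ∫ t : ℝ, t ^ n ∂ν
        = ((inner ℂ (Q g) ((H ^ n) (Q g)) : ℂ)).re) ∧
    (∀ E : ℝ, (∀ s > (0 : ℝ),
        0 < volume {x ∈ G | γ x ∈ Set.Icc (E - s) (E + s)}) →
      (E : ℂ) ∈ spectrum ℂ H) :=
  ac_spectrum_from_intertwining_general H Q P Γop G hGmeas γ hγmeas hP hΓ hQQ hint C hsub
end
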